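/- arXiv:2407.18090 — 2 statements merged into one kernel-verified Lean document; each statement's English description precedes it below -/
import Mathlib

section
/- For every n ≥ 1 there exists a non-deterministic generalised Büchi automaton A_n over the alphabet {1,…,2n} with n+1 states and a colour set of size 2 such that: (a) there exists a generalised Büchi automaton with a single state equivalent to A_n; and (b) every generalised Büchi automaton with a single state equivalent to A_n has a colour set of size at least 2^n. -/
/-- A transition of an automaton: source state, input letter, output colour,
destination state.  (Acceptance is transition-based.) -/
structure AutTrans (Q A Γ : Type) where
  src : Q
  lab : A
  out : Γ
  dst : Q

/-- An (ω-)automaton with finite state set `Q`, input alphabet `A`,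
output alphabet `Γ`, initial state `init`, transition set `delta` and
acceptance condition `acc ⊆ Γ^ω`. -/
structure Automaton (A Γ : Type) where
  Q : Type
  fin : Fintype Q
  init : Q
  delta : Set (AutTrans Q A Γ)
  acc : Set (ℕ → Γ)

/-- The generalised Büchi condition over the colour set `C`
(output alphabet `𝒫(C)`): every colour appears infinitely often. -/
def genBuchi (C : Type) : Set (ℕ → Set C) :=
  {f | ∀ c : C, ∀ n : ℕ, ∃ m : ℕ, n ≤ m ∧ c ∈ f m}

/-- The generalised coBüchi condition over the colour set `C`:
some colour appears only finitely often. -/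
def genCoBuchi (C : Type) : Set (ℕ → Set C) :=
  {f | ∃ c : C, ∃ n : ℕ, ∀ m : ℕ, n ≤ m → c ∉ f m}

namespace Automaton

variable {A Γ : Type}

/-- Number of states. -/
def size (M : Automaton A Γ) : ℕ := @Fintype.card M.Q M.fin

/-- `ρ` is a run of `M` on the word `w`, starting in the state `q`. -/
def IsRunFrom (M : Automaton A Γ) (q : M.Q) (w : ℕ → A)
    (ρ : ℕ → AutTrans M.Q A Γ) : Prop :=
  (ρ 0).src = q ∧ ∀ n : ℕ, ρ n ∈ M.delta ∧ (ρ n).lab = w n ∧ (ρ n).dst = (ρ (n + 1)).src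

/-- The language of `M` with initial state `q`. -/
def LangFrom (M : Automaton A Γ) (q : M.Q) : Set (ℕ → A) :=
  {w | ∃ ρ : ℕ → AutTrans M.Q A Γ, M.IsRunFrom q w ρ ∧ (fun n => (ρ n).out) ∈ M.acc}

/-- The language of `M`. -/
def Lang (M : Automaton A Γ) : Set (ℕ → A) := M.LangFrom M.init

/-- For every state and letter there is at most one outgoing transition. -/
def Deterministic (M : Automaton A Γ) : Prop :=
  ∀ t ∈ M.delta, ∀ t' ∈ M.delta, t.src = t'.src → t.lab = t'.lab → t = t'

/-- For every state and letter there is at least one outgoing transition. -/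
def Complete (M : Automaton A Γ) : Prop :=
  ∀ (p : M.Q) (a : A), ∃ t ∈ M.delta, t.src = p ∧ t.lab = a

/-- The infinite sequence of transitions chosen by a resolver `r` on the word `w`
(`r` is applied to all nonempty finite prefixes of `w`). -/
def resRun (M : Automaton A Γ) (r : List A → AutTrans M.Q A Γ) (w : ℕ → A) :
    ℕ → AutTrans M.Q A Γ :=
  fun n => r (List.ofFn fun i : Fin (n + 1) => w i)

/-- `r` is a resolver for `M`: on every word it induces a run,
which is accepting whenever the word is in the language of `M`. -/
def IsResolver (M : Automaton A Γ) (r : List A → AutTrans M.Q A Γ) : Prop :=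
  ∀ w : ℕ → A, M.IsRunFrom M.init w (M.resRun r w) ∧
    (w ∈ M.Lang → (fun n => (M.resRun r w n).out) ∈ M.acc)

/-- History-determinism: existence of a resolver. -/
def HistoryDeterministic (M : Automaton A Γ) : Prop := ∃ r, M.IsResolver r

/-- `M` admits a resolver such that every state occurs on some accepting run
induced by the resolver. -/
def ResolverTrim (M : Automaton A Γ) : Prop :=
  ∃ r, M.IsResolver r ∧ ∀ q : M.Q, ∃ w ∈ M.Lang, ∃ n : ℕ, (M.resRun r w n).src = q

/-- Reachability along transitions of `M`. -/
def Reach (M : Automaton A Γ) (p q : M.Q) : Prop :=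
  Relation.ReflTransGen (fun x y => ∃ t ∈ M.delta, t.src = x ∧ t.dst = y) p q

/-- Nondeterministic choices lead to language-equivalent states. -/
def SemanticallyDeterministic (M : Automaton A Γ) : Prop :=
  ∀ t ∈ M.delta, ∀ t' ∈ M.delta, t.src = t'.src → t.lab = t'.lab →
    M.LangFrom t.dst = M.LangFrom t'.dst

/- CoBüchi notions: a coBüchi automaton has output alphabet `Set Unit`
(`𝒫(C)` with `|C| = 1`); a transition is a coBüchi transition iff its output
is `{()}` (i.e. `() ∈ out`), and safe iff its output is `∅`. -/

/-- A safe (non-coBüchi) transition from `p` to `q`. -/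
def SafeStep (M : Automaton A (Set Unit)) (p q : M.Q) : Prop :=
  ∃ t ∈ M.delta, t.src = p ∧ t.dst = q ∧ () ∉ t.out

/-- `p` and `q` lie in the same safe component (same SCC of the safe graph). -/
def SafeConn (M : Automaton A (Set Unit)) (p q : M.Q) : Prop :=
  Relation.ReflTransGen M.SafeStep p q ∧ Relation.ReflTransGen M.SafeStep q p

/-- The safe component (as a set of states) of `q`. -/
def safeComponentOf (M : Automaton A (Set Unit)) (q : M.Q) : Set M.Q :=
  {p | M.SafeConn p q}

/-- `(S, D)` is a safe component of `M`, given with its set of safe transitions. -/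
def IsSafeComponent (M : Automaton A (Set Unit)) (S : Set M.Q)
    (D : Set (AutTrans M.Q A (Set Unit))) : Prop :=
  (∃ q : M.Q, S = M.safeComponentOf q) ∧
    D = {t | t ∈ M.delta ∧ t.src ∈ S ∧ t.dst ∈ S ∧ () ∉ t.out}

/-- The safe language of the state `q`: words labelling an infinite safe path from `q`. -/
def SafeLang (M : Automaton A (Set Unit)) (q : M.Q) : Set (ℕ → A) :=
  {w | ∃ ρ : ℕ → AutTrans M.Q A (Set Unit),
    M.IsRunFrom q w ρ ∧ ∀ n : ℕ, () ∉ (ρ n).out}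

/-- The automaton restricted to safe transitions is deterministic. -/
def SafeDeterministic (M : Automaton A (Set Unit)) : Prop :=
  ∀ t ∈ M.delta, ∀ t' ∈ M.delta, () ∉ t.out → () ∉ t'.out →
    t.src = t'.src → t.lab = t'.lab → t = t'

/-- Every transition joining two distinct safe components is a coBüchi transition. -/
def NormalForm (M : Automaton A (Set Unit)) : Prop :=
  ∀ t ∈ M.delta, () ∉ t.out → M.SafeConn t.src t.dst

/-- A coBüchi automaton is nice if all states are reachable and it is
semantically deterministic, in normal form, and safe deterministic. -/
def Nice (M : Automaton A (Set Unit)) : Prop :=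
  (∀ q : M.Q, M.Reach M.init q) ∧ M.SemanticallyDeterministic ∧
    M.NormalForm ∧ M.SafeDeterministic

/-- Equivalent states with equal safe languages are equal. -/
def SafeMinimal (M : Automaton A (Set Unit)) : Prop :=
  ∀ p q : M.Q, M.LangFrom p = M.LangFrom q → M.SafeLang p = M.SafeLang q → p = q

/-- Equivalent states with safe languages comparable for inclusion lie in the
same safe component. -/
def SafeCentralised (M : Automaton A (Set Unit)) : Prop :=
  ∀ p q : M.Q, M.LangFrom p = M.LangFrom q →
    (M.SafeLang p ⊆ M.SafeLang q ∨ M.SafeLang q ⊆ M.SafeLang p) → M.SafeConn p q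

end Automaton

/-- The word `u · w`. -/
def wordAppend {A : Type} (u : List A) (w : ℕ → A) : ℕ → A :=
  fun n => if h : n < u.length then u.get ⟨n, h⟩ else w (n - u.length)

/-- The residual `u⁻¹L`. -/
def residualLang {A : Type} (u : List A) (L : Set (ℕ → A)) : Set (ℕ → A) :=
  {w | wordAppend u w ∈ L}

/-- `L` is prefix-independent: `u⁻¹L = L` for every finite word `u`. -/
def PrefixIndependent {A : Type} (L : Set (ℕ → A)) : Prop :=
  ∀ u : List A, residualLang u L = L

/-- The local alphabet `Σ_R` at the residual `R`: nonempty finite words `v`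
with `v⁻¹R = R` such that no proper nonempty prefix `v'` of `v`
satisfies `v'⁻¹R = R`.  (For `R = u⁻¹L` this says `(uv)⁻¹L = u⁻¹L` and
`(uv')⁻¹L ≠ u⁻¹L` for proper nonempty prefixes.) -/
def localAlphabet {A : Type} (R : Set (ℕ → A)) : Set (List A) :=
  {v | v ≠ [] ∧ residualLang v R = R ∧
    ∀ v' : List A, v' <+: v → v' ≠ [] → v' ≠ v → residualLang v' R ≠ R}

/-- `PathCol M q w X p`: there is a finite path of `M` from `q` to `p`
labelled by `w` whose transitions produce exactly the set of colours `X`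
(the union of the outputs along the path). -/
inductive PathCol {A C : Type} (M : Automaton A (Set C)) :
    M.Q → List A → Set C → M.Q → Prop
  | nil (q : M.Q) : PathCol M q [] ∅ q
  | cons {q r : M.Q} {a : A} {w : List A} {X : Set C}
      (t : AutTrans M.Q A (Set C)) (ht : t ∈ M.delta) (hsrc : t.src = q)
      (hlab : t.lab = a) (htail : PathCol M t.dst w X r) :
      PathCol M q (a :: w) (t.out ∪ X) r

/-- The localisation `A|_R` of a generalised coBüchi automaton `M` to the
residual `R`, with initial state `q0`: states are the states of `M`
recognising `R`, the alphabet is `Σ_R`, and there is a transition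
`q →^{w:X} p` for every finite path of `M` from `q` to `p` labelled by
`w ∈ Σ_R` producing the set of colours `X`. -/
noncomputable def localAut {A C : Type} (M : Automaton A (Set C)) (R : Set (ℕ → A))
    (q0 : {q : M.Q // M.LangFrom q = R}) :
    Automaton (↥(localAlphabet R)) (Set C) where
  Q := {q : M.Q // M.LangFrom q = R}
  fin := by
    letI := M.fin
    classical
    infer_instance
  init := q0
  delta := {t | PathCol M t.src.1 t.lab.1 t.out t.dst.1}
  acc := genCoBuchi C

/-- The automaton `M` with initial state `q`. -/
def withInit {A Γ : Type} (M : Automaton A Γ) (q : M.Q) : Automaton A Γ :=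
  { M with init := q }

/-- Recolour the automaton `M` via `f`, keeping states, initial state and the
underlying transitions, and replacing the acceptance condition by `acc'`. -/
def recolor {A Γ Γ' : Type} (M : Automaton A Γ) (f : AutTrans M.Q A Γ → Γ')
    (acc' : Set (ℕ → Γ')) : Automaton A Γ' where
  Q := M.Q
  fin := M.fin
  init := M.init
  delta := {t' | ∃ t ∈ M.delta, t'.src = t.src ∧ t'.lab = t.lab ∧ t'.out = f t ∧ t'.dst = t.dst}
  acc := acc'

/-- Concatenation of the first `k` blocks of a sequence of finite words. -/
def flattenPrefix {A : Type} (u : ℕ → List A) (k : ℕ) : List A :=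
  (List.ofFn fun i : Fin k => u i).flatten

/-- `x ∈ A^ω` is the concatenation of the infinite sequence of finite words `u`. -/
def IsFlatten {A : Type} (u : ℕ → List A) (x : ℕ → A) : Prop :=
  ∀ (k n : ℕ) (h : n < (flattenPrefix u k).length),
    (flattenPrefix u k).get ⟨n, h⟩ = x n

/-- Cascade composition `B ∘ M`: the outputs of `M` are fed as inputs to `B`. -/
def composeAut {A Γ Γ' : Type} (B : Automaton Γ Γ') (M : Automaton A Γ) :
    Automaton A Γ' where
  Q := M.Q × B.Q
  fin := by letI := M.fin; letI := B.fin; infer_instance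
  init := (M.init, B.init)
  delta := {t | ∃ tM ∈ M.delta, ∃ tB ∈ B.delta,
    t.src = (tM.src, tB.src) ∧ t.lab = tM.lab ∧ tB.lab = tM.out ∧
    t.out = tB.out ∧ t.dst = (tM.dst, tB.dst)}
  acc := B.acc

/-- The language `L_G = ⋂_v L_v` associated with a graph `G`: words over the
vertices such that for every vertex `v`, either the factor `vv` occurs
infinitely often, or letters outside the closed neighbourhood `N[v]` occur
infinitely often. -/
def LG {V : Type} (G : SimpleGraph V) : Set (ℕ → V) :=
  {w | ∀ v : V, (∀ n : ℕ, ∃ m : ℕ, n ≤ m ∧ w m = v ∧ w (m + 1) = v) ∨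
      (∀ n : ℕ, ∃ m : ℕ, n ≤ m ∧ w m ≠ v ∧ ¬ G.Adj v (w m))}

/-!
Over the letters `(i, b)` with `b ∈ {0, 1}`, `A_n` recognises the words in which both letters of
some pair `i` occur infinitely often: it waits, guesses `i`, and then emits colour `b` on `(i, b)`.
A single state suffices if every transversal `T : Fin n → Fin 2` becomes a colour, emitted on the
letters `(i, T i)`. Conversely, in a one-state automaton every sequence of transitions is a run, so
if every colour were emitted on some letter `(i, T i)`, cycling through those transitions would
accept a word over these letters, which is not in the language. Hence each `T` has a colour `c T`
never emitted on its letters, and `T ↦ c T` is injective: if `T i ≠ T' i`, the colour `c T = c T'`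
is emitted on neither letter of the pair `i`, yet it must occur on the accepting runs of
`(i, 0) (i, 1) (i, 0) (i, 1) …`.
-/

theorem exists_seq_forall_frequently_eq (ι : Type) [Nonempty ι] [Countable ι] :
    ∃ e : ℕ → ι, ∀ i k, ∃ m, k ≤ m ∧ e m = i := by
  obtain ⟨s, hs⟩ := exists_surjective_nat ι
  refine ⟨fun m => s m.unpair.1, fun i k => ?_⟩
  obtain ⟨j, rfl⟩ := hs i
  exact ⟨Nat.pair j k, Nat.right_le_pair j k, by simp⟩

namespace Automaton

variable {A C : Type}

theorem subsingleton_Q_of_size_eq_one {Γ : Type} {M : Automaton A Γ} (h : M.size = 1) :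
    Subsingleton M.Q :=
  @Fintype.card_le_one_iff_subsingleton _ M.fin |>.mp h.le

theorem exists_mem_delta_lab_eq {Γ : Type} {M : Automaton A Γ} {q : M.Q} {w : ℕ → A}
    (hw : w ∈ M.LangFrom q) (m : ℕ) : ∃ t ∈ M.delta, t.lab = w m := by
  obtain ⟨ρ, ⟨-, hρ⟩, -⟩ := hw
  exact ⟨ρ m, (hρ m).1, (hρ m).2.1⟩

def Avoids (M : Automaton A (Set C)) (c : C) (S : Set A) : Prop :=
  ∀ t ∈ M.delta, t.lab ∈ S → c ∉ t.out

theorem Avoids.union {M : Automaton A (Set C)} {c : C} {S S' : Set A}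
    (h : M.Avoids c S) (h' : M.Avoids c S') : M.Avoids c (S ∪ S') :=
  fun t ht hlab => hlab.elim (h t ht) (h' t ht)

theorem notMem_langFrom_of_avoids {M : Automaton A (Set C)} (hacc : M.acc = genBuchi C)
    {c : C} {S : Set A} (hc : M.Avoids c S) {q : M.Q} {w : ℕ → A} (hw : ∀ m, w m ∈ S) :
    w ∉ M.LangFrom q := by
  rintro ⟨ρ, ⟨-, hρ⟩, hρacc⟩
  rw [hacc] at hρacc
  obtain ⟨m, -, hcm⟩ := hρacc c 0
  exact hc (ρ m) (hρ m).1 ((hρ m).2.1 ▸ hw m) hcm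

theorem exists_mem_lang_of_subsingleton {M : Automaton A (Set C)} [Subsingleton M.Q]
    (hacc : M.acc = genBuchi C) {ι : Type} [Nonempty ι] [Countable ι]
    (t : ι → AutTrans M.Q A (Set C)) (ht : ∀ i, t i ∈ M.delta)
    (hcov : ∀ c, ∃ i, c ∈ (t i).out) : ∃ w ∈ M.Lang, ∀ m, ∃ i, w m = (t i).lab := by
  obtain ⟨e, he⟩ := exists_seq_forall_frequently_eq ι
  refine ⟨fun m => (t (e m)).lab, ⟨fun m => t (e m), ?_, ?_⟩, fun m => ⟨e m, rfl⟩⟩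
  · exact ⟨Subsingleton.elim _ _, fun m => ⟨ht _, rfl, Subsingleton.elim _ _⟩⟩
  · rw [hacc]
    intro c k
    obtain ⟨i, hi⟩ := hcov c
    obtain ⟨m, hkm, rfl⟩ := he i k
    exact ⟨m, hkm, hi⟩

theorem exists_avoids_of_subsingleton {M : Automaton A (Set C)} [Subsingleton M.Q]
    [Countable C] (hacc : M.acc = genBuchi C) {S : Set A} (hS : ∃ t ∈ M.delta, t.lab ∈ S)
    (hlang : ∀ w ∈ M.Lang, ∃ m, w m ∉ S) : ∃ c, M.Avoids c S := by
  by_contra! hemit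
  simp only [Avoids, not_forall, not_not, exists_prop] at hemit
  obtain ⟨t₀, ht₀, ht₀S⟩ := hS
  choose t ht htS hct using hemit
  -- `t₀` keeps the family nonempty when `C` is empty.
  obtain ⟨w, hw, hwS⟩ := exists_mem_lang_of_subsingleton hacc (Option.elim · t₀ t)
    (by rintro (_ | c) <;> simp [ht₀, ht]) (fun c => ⟨some c, hct c⟩)
  obtain ⟨m, hm⟩ := hlang w hw
  obtain ⟨(_ | c), hwm⟩ := hwS m
  · exact hm (hwm ▸ ht₀S)
  · exact hm (hwm ▸ htS c)

end Automaton

section PairLang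

variable {ι A : Type} (letter : ι → Fin 2 → A)

def pairLang : Set (ℕ → A) :=
  {w | ∃ i, ∀ b k, ∃ m, k ≤ m ∧ w m = letter i b}

def pairWord (i : ι) : ℕ → A := fun m => letter i (Fin.ofNat 2 m)

theorem pairWord_mem_pairLang (i : ι) : pairWord letter i ∈ pairLang letter := by
  refine ⟨i, fun b k => ⟨2 * k + b, by omega, ?_⟩⟩
  simp only [pairWord]
  congr
  ext
  simp only [Fin.val_ofNat]
  omega

theorem notMem_pairLang_of_transversal (hletter : Function.Injective2 letter) {T : ι → Fin 2}
    {w : ℕ → A} (hw : ∀ m, w m ∈ Set.range fun i => letter i (T i)) : w ∉ pairLang letter := by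
  rintro ⟨i, hi⟩
  obtain ⟨b, hb⟩ := exists_ne (T i)
  obtain ⟨m, -, hm⟩ := hi b 0
  obtain ⟨j, hj⟩ := hw m
  obtain ⟨rfl, hbj⟩ := hletter (hj.trans hm)
  exact hb hbj.symm

def guessAut [Fintype ι] : Automaton A (Set (Fin 2)) where
  Q := Option ι
  fin := inferInstance
  init := none
  delta := {t | t.src = none ∧ t.out = ∅ ∨
    ∃ i, t.src = some i ∧ t.dst = some i ∧ t.out = {b | t.lab = letter i b}}
  acc := genBuchi (Fin 2)

variable [Fintype ι]

theorem guessAut_mem_delta_of_src_eq_some {t : AutTrans (Option ι) A (Set (Fin 2))}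
    (ht : t ∈ (guessAut letter).delta) {i : ι} (hsrc : t.src = some i) :
    t.dst = some i ∧ t.out = {b | t.lab = letter i b} := by
  rcases ht with ⟨h, -⟩ | ⟨j, hj, hdst, hout⟩
  · simp [h] at hsrc
  · obtain rfl : j = i := Option.some_injective _ (hj.symm.trans hsrc)
    exact ⟨hdst, hout⟩

theorem guessAut_src_eq_some_of_mem_out {t : AutTrans (Option ι) A (Set (Fin 2))}
    (ht : t ∈ (guessAut letter).delta) {b : Fin 2} (hb : b ∈ t.out) : ∃ i, t.src = some i := by
  rcases ht with ⟨-, hout⟩ | ⟨i, hi, -⟩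
  · simp [hout] at hb
  · exact ⟨i, hi⟩

theorem guessAut_src_eq_of_le {q : Option ι} {w : ℕ → A}
    {ρ : ℕ → AutTrans (Option ι) A (Set (Fin 2))} (hρ : (guessAut letter).IsRunFrom q w ρ)
    {i : ι} {m₀ : ℕ} (h₀ : (ρ m₀).src = some i) {m : ℕ} (hm : m₀ ≤ m) :
    (ρ m).src = some i := by
  induction m, hm using Nat.le_induction with
  | base => exact h₀
  | succ m _ ih =>
    rw [← (hρ.2 m).2.2]
    exact (guessAut_mem_delta_of_src_eq_some letter (hρ.2 m).1 ih).1

theorem guessAut_lang : (guessAut letter).Lang = pairLang letter := by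
  ext w
  constructor
  · rintro ⟨ρ, hρ, hρacc⟩
    obtain ⟨m₀, -, h₀⟩ := hρacc 0 0
    obtain ⟨i, hi⟩ := guessAut_src_eq_some_of_mem_out letter (hρ.2 m₀).1 h₀
    refine ⟨i, fun b k => ?_⟩
    obtain ⟨m, hm, hb⟩ := hρacc b (max k m₀)
    have hsrc := guessAut_src_eq_of_le letter hρ hi (le_of_max_le_right hm)
    have hout := (guessAut_mem_delta_of_src_eq_some letter (hρ.2 m).1 hsrc).2
    refine ⟨m, le_of_max_le_left hm, ?_⟩
    have hb : b ∈ (ρ m).out := hb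
    rw [hout] at hb
    rw [← (hρ.2 m).2.1]
    exact hb
  · rintro ⟨i, hi⟩
    let ρ : ℕ → AutTrans (Option ι) A (Set (Fin 2)) := fun m =>
      if m = 0 then ⟨none, w 0, ∅, some i⟩ else ⟨some i, w m, {b | w m = letter i b}, some i⟩
    refine ⟨ρ, ⟨rfl, fun m => ?_⟩, fun b k => ?_⟩
    · rcases m with _ | m
      · exact ⟨Or.inl ⟨rfl, rfl⟩, rfl, rfl⟩
      · exact ⟨Or.inr ⟨i, rfl, rfl, rfl⟩, rfl, rfl⟩
    · obtain ⟨m, hm, hw⟩ := hi b (k + 1)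
      refine ⟨m, by omega, ?_⟩
      simp only [ρ, if_neg (show m ≠ 0 by omega)]
      exact hw

def transversalAut : Automaton A (Set (ι → Fin 2)) where
  Q := Unit
  fin := inferInstance
  init := ()
  delta := {t | t.out = {T | ∃ i, t.lab = letter i (T i)}}
  acc := genBuchi (ι → Fin 2)

theorem transversalAut_lang : (transversalAut letter).Lang = pairLang letter := by
  ext w
  constructor
  · rintro ⟨ρ, ⟨-, hρ⟩, hρacc⟩
    by_contra! hw
    simp only [pairLang, Set.mem_ofPred_eq, not_exists, not_forall, not_and] at hw
    choose T k hk using hw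
    obtain ⟨m, hm, hTm⟩ := hρacc T (Finset.univ.sup k)
    have hTm : T ∈ (ρ m).out := hTm
    rw [(hρ m).1] at hTm
    obtain ⟨i, hi⟩ := hTm
    rw [(hρ m).2.1] at hi
    exact hk i m ((Finset.le_sup (Finset.mem_univ i)).trans hm) hi
  · rintro ⟨i, hi⟩
    refine ⟨fun m => ⟨(), w m, {T | ∃ j, w m = letter j (T j)}, ()⟩,
      ⟨rfl, fun m => ⟨rfl, rfl, rfl⟩⟩, fun T k => ?_⟩
    obtain ⟨m, hm, hw⟩ := hi (T i) k
    exact ⟨m, hm, i, hw⟩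

theorem two_pow_card_le_card_of_lang_eq_pairLang (hletter : Function.Injective2 letter)
    [Nonempty ι] {C : Type} [Fintype C] (B : Automaton A (Set C)) (hacc : B.acc = genBuchi C)
    (hsize : B.size = 1) (hlang : B.Lang = pairLang letter) :
    2 ^ Fintype.card ι ≤ Fintype.card C := by
  classical
  have := B.subsingleton_Q_of_size_eq_one hsize
  obtain ⟨i₀⟩ := ‹Nonempty ι›
  have hpair : ∀ i, pairWord letter i ∈ B.Lang := fun i => hlang ▸ pairWord_mem_pairLang letter i
  have hcol : ∀ T : ι → Fin 2, ∃ c, B.Avoids c (Set.range fun i => letter i (T i)) := by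
    intro T
    refine B.exists_avoids_of_subsingleton hacc ?_ fun w hw => ?_
    · obtain ⟨t, ht, hlab⟩ := B.exists_mem_delta_lab_eq (hpair i₀) (T i₀)
      exact ⟨t, ht, i₀, by simp [hlab, pairWord]⟩
    · by_contra! hwT
      exact notMem_pairLang_of_transversal letter hletter hwT (hlang ▸ hw)
  choose c hc using hcol
  have hinj : Function.Injective c := by
    intro T T' hTT'
    by_contra hne
    obtain ⟨i, hi⟩ := Function.ne_iff.mp hne
    refine B.notMem_langFrom_of_avoids hacc ((hc T).union (hTT' ▸ hc T')) (fun m => ?_) (hpair i)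
    have hFin2 : ∀ a b c : Fin 2, a ≠ b → c = a ∨ c = b := by decide
    rcases hFin2 _ _ (Fin.ofNat 2 m) hi with h | h
    · exact .inl ⟨i, congrArg (letter i) h.symm⟩
    · exact .inr ⟨i, congrArg (letter i) h.symm⟩
  simpa using Fintype.card_le_of_injective c hinj

end PairLang

def pairLetter (n : ℕ) (i : Fin n) (b : Fin 2) : Fin (2 * n) := finProdFinEquiv (b, i)

theorem pairLetter_injective2 (n : ℕ) : Function.Injective2 (pairLetter n) := by
  intro i i' b b' h
  have := Prod.ext_iff.mp (finProdFinEquiv.injective h)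
  exact ⟨this.2, this.1⟩

/-- for every `n ≥ 1` there is a non-deterministic generalised
Büchi automaton `A_n` over the alphabet `{1, …, 2n}` with `n + 1` states and
`2` colours that is equivalent to some one-state generalised Büchi automaton,
while every one-state generalised Büchi automaton equivalent to `A_n` needs at
least `2ⁿ` colours. -/
theorem stmt_18 (n : ℕ) (hn : 1 ≤ n) :
    ∃ (C : Type) (iC : Fintype C) (M : Automaton (Fin (2 * n)) (Set C)),
      M.acc = genBuchi C ∧ M.size = n + 1 ∧ @Fintype.card C iC = 2 ∧
      (∃ (C₁ : Type) (_ : Fintype C₁) (B : Automaton (Fin (2 * n)) (Set C₁)),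
        B.acc = genBuchi C₁ ∧ B.size = 1 ∧ B.Lang = M.Lang) ∧
      (∀ (C₂ : Type) (iC₂ : Fintype C₂) (B : Automaton (Fin (2 * n)) (Set C₂)),
        B.acc = genBuchi C₂ → B.size = 1 → B.Lang = M.Lang →
        2 ^ n ≤ @Fintype.card C₂ iC₂) := by
  refine ⟨Fin 2, inferInstance, guessAut (pairLetter n), rfl, ?_, by simp, ?_, ?_⟩
  · exact Fintype.card_option.trans (by simp)
  · refine ⟨_, inferInstance, transversalAut (pairLetter n), rfl, ?_, ?_⟩
    · exact Fintype.card_unit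
    · rw [transversalAut_lang, guessAut_lang]
  · intro C₂ iC₂ B hacc hsize hlang
    have : Nonempty (Fin n) := ⟨⟨0, hn⟩⟩
    simpa using two_pow_card_le_card_of_lang_eq_pairLang (pairLetter n) (pairLetter_injective2 n)
      B hacc hsize (hlang.trans (guessAut_lang _))
end

section
/- Let n ≥ 1 and let (S_γ)_{γ∈Γ} be a finite family of subsets of {1,…,2n} such that for every subset X ⊆ {1,…,2n}: (X ∩ S_γ ≠ ∅ for all γ ∈ Γ) holds if and only if there exists i ∈ {1,…,n} with {2i−1, 2i} ⊆ X. Then |Γ| ≥ 2^n. -/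
/-- every CNF over `{1, …, 2n}` (clauses given by the sets of
positive literals `S γ`) equivalent to the DNF
`(1 ∧ 2) ∨ (3 ∧ 4) ∨ … ∨ (2n−1 ∧ 2n)` has at least `2ⁿ` clauses. -/
theorem stmt_19 (n : ℕ) (hn : 1 ≤ n) (Γ : Type) [Fintype Γ]
    (S : Γ → Set (Fin (2 * n)))
    (h : ∀ X : Set (Fin (2 * n)),
      (∀ γ : Γ, ∃ x ∈ X, x ∈ S γ) ↔
      (∃ i : ℕ, i < n ∧
        ∀ x : Fin (2 * n), ((x : ℕ) = 2 * i ∨ (x : ℕ) = 2 * i + 1) → x ∈ X)) :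
    2 ^ n ≤ Fintype.card Γ := by
  classical
  set XX : (Fin n → Bool) → Set (Fin (2 * n)) :=
    fun f => {x | ((x : ℕ) % 2 = 1) ↔ f ⟨(x : ℕ) / 2, by omega⟩ = true} with hXX
  have hfail : ∀ f : Fin n → Bool, ¬ (∀ γ : Γ, ∃ x ∈ XX f, x ∈ S γ) := by
    intro f hall
    obtain ⟨i, hi, hx⟩ := (h (XX f)).mp hall
    have h0 : (⟨2 * i, by omega⟩ : Fin (2 * n)) ∈ XX f := hx _ (Or.inl rfl)
    have h1 : (⟨2 * i + 1, by omega⟩ : Fin (2 * n)) ∈ XX f := hx _ (Or.inr rfl)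
    simp only [hXX, Set.mem_setOf_eq, Fin.val_mk] at h0 h1
    have e0 : (2 * i) % 2 = 0 := by omega
    have e1 : (2 * i + 1) % 2 = 1 := by omega
    have d0 : (2 * i) / 2 = i := by omega
    have d1 : (2 * i + 1) / 2 = i := by omega
    simp only [e0, e1, d0, d1] at h0 h1
    exact absurd (h0.mpr (h1.mp trivial)) (by omega)
  have hchoice : ∀ f : Fin n → Bool, ∃ γ : Γ, ∀ x ∈ XX f, x ∉ S γ := by
    intro f
    by_contra hc
    push_neg at hc
    exact hfail f fun γ => hc γ
  choose g hg using hchoice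
  have hmem : ∀ (f : Fin n → Bool) (i : Fin n) (x : Fin (2 * n)),
      ((x : ℕ) = 2 * (i : ℕ) ∧ f i = false) ∨ ((x : ℕ) = 2 * (i : ℕ) + 1 ∧ f i = true) →
      x ∈ XX f := by
    intro f i x hx
    show ((x : ℕ) % 2 = 1) ↔ f ⟨(x : ℕ) / 2, by omega⟩ = true
    have hd : ((x : ℕ) / 2) = (i : ℕ) := by omega
    simp only [hd, Fin.eta]
    rcases hx with ⟨hx, hf⟩ | ⟨hx, hf⟩
    · simp only [hf]
      constructor
      · intro h2; omega
      · intro h2; exact absurd h2 (by simp)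
    · simp only [hf]
      constructor
      · intro _; trivial
      · intro _; omega
  have hginj : Function.Injective g := by
    intro f f' hff'
    by_contra hne
    obtain ⟨i, hi⟩ : ∃ i, f i ≠ f' i := by
      by_contra hall; push_neg at hall; exact hne (funext hall)
    have hpair : ∀ γ : Γ, ∃ x ∈ XX f ∪ XX f', x ∈ S γ := by
      apply (h _).mpr
      refine ⟨i, i.isLt, ?_⟩
      intro x hx
      rcases Bool.eq_false_or_eq_true (f i) with hf | hf
      · have hf' : f' i = false := by
          cases hb : f' i
          · rfl
          · exact absurd (hf.trans hb.symm) hi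
        rcases hx with hx | hx
        · exact Or.inr (hmem f' i x (Or.inl ⟨hx, hf'⟩))
        · exact Or.inl (hmem f i x (Or.inr ⟨hx, hf⟩))
      · have hf' : f' i = true := by
          cases hb : f' i
          · exact absurd (hf.trans hb.symm) hi
          · rfl
        rcases hx with hx | hx
        · exact Or.inl (hmem f i x (Or.inl ⟨hx, hf⟩))
        · exact Or.inr (hmem f' i x (Or.inr ⟨hx, hf'⟩))
    obtain ⟨x, hxmem, hxS⟩ := hpair (g f)
    rcases hxmem with hx | hx
    · exact hg f x hx hxS
    · rw [hff'] at hxS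
      exact hg f' x hx hxS
  calc 2 ^ n = Fintype.card (Fin n → Bool) := by simp
    _ ≤ Fintype.card Γ := Fintype.card_le_of_injective g hginj
end
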